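/- Let P_{S|X} be an invertible column-stochastic matrix, P_{T|X} a column-stochastic matrix, P_X a probability vector with positive entries, P_S := P_{S|X} P_X and P_T := P_{T|X} P_X, both with positive entries. Define W^{T;Y} := [√P_T]^{-1} P_{T|X} (P_{S|X})^{-1} [√P_S]. Then (W^{T;Y})^T W^{T;Y} √P_S = √P_S, i.e., √P_S is a right singular vector of W^{T;Y} with singular value 1. -/

import Mathlib

/-!
The matrix `M := P_{T|X} P_{S|X}⁻¹` sends `P_S` to `P_T`, and `𝟙ᵀ M = 𝟙ᵀ` since both factors
preserve `𝟙ᵀ`. Hence `W = [√P_T]⁻¹ M [√P_S]` sends `√P_S` to `√P_T`, and `Wᵀ` sends `√P_T` back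
to `√P_S`.
-/

open Matrix

section ColumnSums

variable {m n R : Type*}

lemma one_vecMul_eq_one_of_sum_col [Fintype m] [NonAssocSemiring R] {A : Matrix m n R}
    (h : ∀ j, ∑ i, A i j = 1) : 1 ᵥ* A = 1 := by
  ext j
  simp [vecMul, dotProduct, h j]

lemma one_vecMul_nonsing_inv [Fintype n] [DecidableEq n] [CommRing R] {A : Matrix n n R}
    (hA : IsUnit A.det) (h : 1 ᵥ* A = 1) : 1 ᵥ* A⁻¹ = 1 :=
  calc 1 ᵥ* A⁻¹ = 1 ᵥ* A ᵥ* A⁻¹ := by rw [h]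
    _ = 1 := by rw [vecMul_vecMul, mul_nonsing_inv _ hA, vecMul_one]

end ColumnSums

section SqrtScaling

variable {m n : Type*} [Fintype m] [Fintype n] [DecidableEq m] [DecidableEq n]

lemma diagonal_sqrt_mulVec_sqrt {p : n → ℝ} (hp : ∀ s, 0 ≤ p s) :
    diagonal (fun s => √(p s)) *ᵥ (fun s => √(p s)) = p := by
  ext s
  rw [mulVec_diagonal, Real.mul_self_sqrt (hp s)]

lemma sqrt_vecMul_diagonal_inv_sqrt {q : m → ℝ} (hq : ∀ j, 0 < q j) :
    (fun j => √(q j)) ᵥ* diagonal (fun j => (√(q j))⁻¹) = 1 := by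
  ext j
  rw [vecMul_diagonal, Pi.one_apply, mul_inv_cancel₀ (Real.sqrt_pos.mpr (hq j)).ne']

lemma diagonal_inv_sqrt_mul_mul_diagonal_sqrt_mulVec_sqrt (M : Matrix m n ℝ) {p : n → ℝ}
    {q : m → ℝ} (hp : ∀ s, 0 ≤ p s) (hMp : M *ᵥ p = q) :
    (diagonal (fun j => (√(q j))⁻¹) * M * diagonal (fun s => √(p s))) *ᵥ (fun s => √(p s)) =
      fun j => √(q j) := by
  rw [← mulVec_mulVec, diagonal_sqrt_mulVec_sqrt hp, ← mulVec_mulVec, hMp]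
  ext j
  rw [mulVec_diagonal, inv_mul_eq_div, Real.div_sqrt]

lemma transpose_diagonal_inv_sqrt_mul_mul_diagonal_sqrt_mulVec_sqrt (M : Matrix m n ℝ)
    (p : n → ℝ) {q : m → ℝ} (hq : ∀ j, 0 < q j) (hM : 1 ᵥ* M = 1) :
    (diagonal (fun j => (√(q j))⁻¹) * M * diagonal (fun s => √(p s)))ᵀ *ᵥ (fun j => √(q j)) =
      fun s => √(p s) := by
  rw [mulVec_transpose, ← vecMul_vecMul, ← vecMul_vecMul, sqrt_vecMul_diagonal_inv_sqrt hq, hM]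
  ext s
  rw [vecMul_diagonal, Pi.one_apply, one_mul]

end SqrtScaling

open Matrix in
theorem stmt4_general {n t : Type*} [Fintype n] [DecidableEq n] [Fintype t] [DecidableEq t]
    (PSX : Matrix n n ℝ) (hinv : IsUnit PSX.det)
    (hScol : ∀ x, ∑ s, PSX s x = 1)
    (PTX : Matrix t n ℝ) (hTcol : ∀ x, ∑ j, PTX j x = 1)
    (PX : n → ℝ)
    (PS : n → ℝ) (hPS : PS = PSX.mulVec PX) (hPSpos : ∀ s, 0 < PS s)
    (PT : t → ℝ) (hPT : PT = PTX.mulVec PX) (hPTpos : ∀ j, 0 < PT j)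
    (W : Matrix t n ℝ)
    (hW : W = (Matrix.diagonal fun j => (Real.sqrt (PT j))⁻¹) * PTX * PSX⁻¹ *
        Matrix.diagonal fun s => Real.sqrt (PS s)) :
    (Wᵀ * W).mulVec (fun s => Real.sqrt (PS s)) = fun s => Real.sqrt (PS s) := by
  have hMPS : (PTX * PSX⁻¹) *ᵥ PS = PT := by
    rw [hPS, hPT, mulVec_mulVec, Matrix.mul_assoc, nonsing_inv_mul _ hinv, Matrix.mul_one]
  have hM : 1 ᵥ* (PTX * PSX⁻¹) = 1 := by
    rw [← vecMul_vecMul, one_vecMul_eq_one_of_sum_col hTcol,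
      one_vecMul_nonsing_inv hinv (one_vecMul_eq_one_of_sum_col hScol)]
  rw [hW, Matrix.mul_assoc _ PTX, ← mulVec_mulVec,
    diagonal_inv_sqrt_mul_mul_diagonal_sqrt_mulVec_sqrt _ (fun s => (hPSpos s).le) hMPS,
    transpose_diagonal_inv_sqrt_mul_mul_diagonal_sqrt_mulVec_sqrt _ _ hPTpos hM]

open Matrix in
/-- With `P_{S|X}` invertible column-stochastic, `P_{T|X}` column-stochastic,
`P_X` a positive probability vector, `P_S := P_{S|X} P_X`, `P_T := P_{T|X} P_X` positive,
and `W^{T;Y} := [√P_T]⁻¹ P_{T|X} (P_{S|X})⁻¹ [√P_S]`, we have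
`(W^{T;Y})ᵀ W^{T;Y} √P_S = √P_S`. -/
theorem stmt4 {n t : Type*} [Fintype n] [DecidableEq n] [Fintype t] [DecidableEq t]
    (PSX : Matrix n n ℝ) (hinv : IsUnit PSX.det)
    (hScol : ∀ x, ∑ s, PSX s x = 1)
    (PTX : Matrix t n ℝ) (hTcol : ∀ x, ∑ j, PTX j x = 1)
    (PX : n → ℝ) (hPXpos : ∀ x, 0 < PX x) (hPXsum : ∑ x, PX x = 1)
    (PS : n → ℝ) (hPS : PS = PSX.mulVec PX) (hPSpos : ∀ s, 0 < PS s)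
    (PT : t → ℝ) (hPT : PT = PTX.mulVec PX) (hPTpos : ∀ j, 0 < PT j)
    (W : Matrix t n ℝ)
    (hW : W = (Matrix.diagonal fun j => (Real.sqrt (PT j))⁻¹) * PTX * PSX⁻¹ *
        Matrix.diagonal fun s => Real.sqrt (PS s)) :
    (Wᵀ * W).mulVec (fun s => Real.sqrt (PS s)) = fun s => Real.sqrt (PS s) :=
  stmt4_general PSX hinv hScol PTX hTcol PX PS hPS hPSpos PT hPT hPTpos W hW
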